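/- Let Φ be a vector in ℂ^(V × {0,…,d−1}) satisfying W Φ = −Φ, and set a_u = ⟨ψ_u, Φ⟩. Then a_u = −a_v for every pair of adjacent vertices u, v (i.e. whenever A(u,v) ≠ 0). Consequently, if in addition the graph contains a closed walk of odd length and any two vertices are joined by a path of edges, then a_u = 0 for all u ∈ V. -/

import Mathlib

/-!
Read at `x` and at `σ x`, the equation `W Φ = -Φ` says
`2 ⟨ψ_{(σ x).1}, Φ⟩ / √d = Φ (σ x) - Φ x` and `2 ⟨ψ_{x.1}, Φ⟩ / √d = Φ x - Φ (σ x)`;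
adding the two, the overlaps at the ends of every edge are opposite. Around an odd closed walk
an overlap therefore equals its own negative, so it vanishes, and connectivity spreads the zero.
-/

open scoped InnerProductSpace
open Complex

/-- The coin state `ψ_u = (1/√d) Σ_g e_{(u,g)}`. -/
noncomputable def psiState (V : Type*) [Fintype V] [DecidableEq V] (d : ℕ) (u : V) :
    EuclideanSpace ℂ (V × Fin d) :=
  WithLp.toLp 2 (fun x => if x.1 = u then ((1 / Real.sqrt d : ℝ) : ℂ) else 0)

/-- The coin operator `C = 2 Σ_u |ψ_u⟩⟨ψ_u| − I` applied to a vector. -/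
noncomputable def coinOp {V : Type*} [Fintype V] [DecidableEq V] {d : ℕ}
    (Φ : EuclideanSpace ℂ (V × Fin d)) : EuclideanSpace ℂ (V × Fin d) :=
  (2 : ℂ) • (∑ u : V, ⟪psiState V d u, Φ⟫_ℂ • psiState V d u) - Φ

/-- The flip-flop walk operator `W = S C`, where `S e_x = e_{σ(x)}`. -/
noncomputable def walkOp {V : Type*} [Fintype V] [DecidableEq V] {d : ℕ}
    (σ : V × Fin d → V × Fin d) (Φ : EuclideanSpace ℂ (V × Fin d)) :
    EuclideanSpace ℂ (V × Fin d) :=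
  WithLp.toLp 2 (fun x => coinOp Φ (σ x))

/-- The normalized adjacency matrix entry `A(u,v) = |{g : (σ(u,g)).1 = v}| / d`. -/
noncomputable def adjEntry {V : Type*} [Fintype V] [DecidableEq V] {d : ℕ}
    (σ : V × Fin d → V × Fin d) (u v : V) : ℝ :=
  (Finset.univ.filter (fun g : Fin d => (σ (u, g)).1 = v)).card / d

section Alternating

variable {V R : Type*} (r : V → V → Prop) (f : V → R)

theorem apply_walk_eq_neg_one_pow_mul [Ring R] (hf : ∀ u v, r u v → f u = -f v)
    {n : ℕ} {c : ℕ → V} (hc : ∀ i < n, r (c i) (c (i + 1))) :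
    f (c n) = (-1) ^ n * f (c 0) := by
  induction n with
  | zero => simp
  | succ n ih =>
    rw [← neg_eq_iff_eq_neg.mpr (hf _ _ (hc n n.lt_succ_self)), ih fun i hi => hc i (by omega),
      pow_succ, mul_neg_one, neg_mul]

theorem apply_eq_zero_of_odd_closed_walk [Ring R] [NoZeroDivisors R] [CharZero R]
    (hf : ∀ u v, r u v → f u = -f v) {n : ℕ} {c : ℕ → V} (hn : Odd n) (hcn : c n = c 0)
    (hc : ∀ i < n, r (c i) (c (i + 1))) : f (c 0) = 0 := by
  have h := apply_walk_eq_neg_one_pow_mul r f hf hc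
  rwa [hcn, hn.neg_one_pow, neg_one_mul, CharZero.eq_neg_self_iff] at h

theorem apply_eq_zero_of_reflTransGen [AddGroup R] (hf : ∀ u v, r u v → f u = -f v)
    {u v : V} (huv : Relation.ReflTransGen r u v) (hu : f u = 0) : f v = 0 := by
  induction huv with
  | refl => exact hu
  | tail _ hpq ih => rw [← neg_eq_zero, ← hf _ _ hpq, ih]

end Alternating

section FlipFlop

variable {V : Type*} [Fintype V] [DecidableEq V] {d : ℕ}

theorem psiState_apply (u : V) (x : V × Fin d) :
    psiState V d u x = if x.1 = u then ((1 / Real.sqrt d : ℝ) : ℂ) else 0 := rfl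

theorem coinOp_apply (Φ : EuclideanSpace ℂ (V × Fin d)) (x : V × Fin d) :
    coinOp Φ x = 2 * ⟪psiState V d x.1, Φ⟫_ℂ * ((1 / Real.sqrt d : ℝ) : ℂ) - Φ x := by
  simp [coinOp, psiState_apply, mul_assoc]

theorem walkOp_apply (σ : V × Fin d → V × Fin d) (Φ : EuclideanSpace ℂ (V × Fin d))
    (x : V × Fin d) : walkOp σ Φ x = coinOp Φ (σ x) := rfl

theorem exists_rotation_of_adjEntry_ne_zero {σ : V × Fin d → V × Fin d} {u v : V}
    (h : adjEntry σ u v ≠ 0) : ∃ g, (σ (u, g)).1 = v := by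
  by_contra! hg
  simp [adjEntry, hg] at h

theorem walkOp_eq_neg_iff (σ : V × Fin d → V × Fin d) (Φ : EuclideanSpace ℂ (V × Fin d)) :
    walkOp σ Φ = -Φ ↔ ∀ x, 2 * ⟪psiState V d (σ x).1, Φ⟫_ℂ * ((1 / Real.sqrt d : ℝ) : ℂ) =
      Φ (σ x) - Φ x := by
  simp only [WithLp.ext_iff, funext_iff, walkOp_apply, coinOp_apply, WithLp.ofLp_neg,
    Pi.neg_apply, sub_eq_iff_eq_add, neg_add_eq_sub]

theorem inner_psiState_eq_neg_of_adjEntry_ne_zero (hd : d ≠ 0) {σ : V × Fin d → V × Fin d}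
    (hσ : Function.Involutive σ) {Φ : EuclideanSpace ℂ (V × Fin d)} (hW : walkOp σ Φ = -Φ)
    {u v : V} (huv : adjEntry σ u v ≠ 0) :
    ⟪psiState V d u, Φ⟫_ℂ = -⟪psiState V d v, Φ⟫_ℂ := by
  obtain ⟨g, rfl⟩ := exists_rotation_of_adjEntry_ne_zero huv
  have hx := (walkOp_eq_neg_iff σ Φ).1 hW (u, g)
  have hσx := (walkOp_eq_neg_iff σ Φ).1 hW (σ (u, g))
  rw [hσ] at hσx
  have hsum : 2 * ((1 / Real.sqrt d : ℝ) : ℂ) *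
      (⟪psiState V d u, Φ⟫_ℂ + ⟪psiState V d (σ (u, g)).1, Φ⟫_ℂ) = 0 := by
    linear_combination hx + hσx
  exact eq_neg_iff_add_eq_zero.2 ((mul_eq_zero.1 hsum).resolve_left (by simp [hd]))

end FlipFlop

theorem walk_antifixed_vector_alternating_overlaps_general
    {V : Type*} [Fintype V] [DecidableEq V] {d : ℕ} (hd : 1 ≤ d)
    (σ : V × Fin d → V × Fin d) (hσ : ∀ x, σ (σ x) = x)
    (Φ : EuclideanSpace ℂ (V × Fin d)) (hW : walkOp σ Φ = -Φ)
    (a : V → ℂ) (ha : ∀ u, a u = ⟪psiState V d u, Φ⟫_ℂ) :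
    (∀ u v : V, adjEntry σ u v ≠ 0 → a u = -a v) ∧
    ((∃ (n : ℕ) (c : ℕ → V), Odd n ∧ c n = c 0 ∧
        ∀ i < n, adjEntry σ (c i) (c (i + 1)) ≠ 0) →
      (∀ u v : V, Relation.ReflTransGen (fun p q : V => adjEntry σ p q ≠ 0) u v) →
      ∀ u : V, a u = 0) := by
  have hedge (u v : V) (huv : adjEntry σ u v ≠ 0) : a u = -a v := by
    rw [ha, ha]
    exact inner_psiState_eq_neg_of_adjEntry_ne_zero (by omega) hσ hW huv
  refine ⟨hedge, ?_⟩
  rintro ⟨n, c, hn, hcn, hc⟩ hconn u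
  exact apply_eq_zero_of_reflTransGen _ a hedge (hconn (c 0) u)
    (apply_eq_zero_of_odd_closed_walk _ a hedge hn hcn hc)

/-- If `W Φ = −Φ` and `a_u = ⟨ψ_u, Φ⟩`, then `a_u = −a_v` for adjacent
`u, v`.  Consequently, if the graph contains a closed walk of odd length and is connected,
then all `a_u` vanish. -/
theorem walk_antifixed_vector_alternating_overlaps
    {V : Type*} [Fintype V] [DecidableEq V] [Nonempty V] {d : ℕ} (hd : 1 ≤ d)
    (σ : V × Fin d → V × Fin d) (hσ : ∀ x, σ (σ x) = x)
    (Φ : EuclideanSpace ℂ (V × Fin d)) (hW : walkOp σ Φ = -Φ)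
    (a : V → ℂ) (ha : ∀ u, a u = ⟪psiState V d u, Φ⟫_ℂ) :
    (∀ u v : V, adjEntry σ u v ≠ 0 → a u = -a v) ∧
    ((∃ (n : ℕ) (c : ℕ → V), Odd n ∧ c n = c 0 ∧
        ∀ i < n, adjEntry σ (c i) (c (i + 1)) ≠ 0) →
      (∀ u v : V, Relation.ReflTransGen (fun p q : V => adjEntry σ p q ≠ 0) u v) →
      ∀ u : V, a u = 0) :=
  walk_antifixed_vector_alternating_overlaps_general hd σ hσ Φ hW a ha
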